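/- arXiv:2406.09810 — 2 statements merged into one kernel-verified Lean document; each statement's English description precedes it below -/
import Mathlib

section
/- Let D = diag(d₁, …, dₙ) be a real diagonal matrix with all dᵢ > 0, let J₀ be an n×n complex matrix, and suppose there exists an invertible matrix P such that both P⁻¹DP and P⁻¹J₀P are upper triangular. Suppose for some index k, the diagonal entry μₖ = (P⁻¹J₀P)ₖₖ satisfies Re μₖ > 0, and let λ be a real number with λ > (maxᵢ dᵢ) / Re μₖ. Then the matrix −D + λJ₀ has an eigenvalue with strictly positive real part. -/
/-!
Conjugating by `P` makes `-D + λ J₀` upper triangular, so its `k`-th diagonal entry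
`-δ + λ μₖ` is an eigenvalue. Here `δ = (P⁻¹ D P)ₖₖ` is itself an eigenvalue of `D`, i.e. some
`dᵢ ≤ maxᵢ dᵢ`, while `λ Re μₖ > maxᵢ dᵢ`; hence `Re (-δ + λ μₖ) > 0`.
-/

open Matrix

namespace Matrix

variable {n R : Type*}

theorem BlockTriangular.smul {α S : Type*} [LT α] [Zero R] [SMulZeroClass S R]
    {M : Matrix n n R} {b : n → α} (hM : M.BlockTriangular b) (c : S) :
    (c • M).BlockTriangular b :=
  fun _ _ h => by rw [smul_apply, hM h, smul_zero]

variable [Fintype n] [DecidableEq n]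

theorem IsUpperTriangular.diag_mem_spectrum [CommRing R] [Nontrivial R] [LinearOrder n]
    {M : Matrix n n R} (hM : M.IsUpperTriangular) (i : n) :
    M i i ∈ spectrum R M := by
  apply mem_spectrum_of_isRoot_charpoly
  rw [charpoly_of_isUpperTriangular M hM, Polynomial.IsRoot, Polynomial.eval_prod]
  exact Finset.prod_eq_zero (Finset.mem_univ i) (by simp)

theorem spectrum_nonsing_inv_mul_mul [CommRing R] {P : Matrix n n R} (hP : IsUnit P)
    (M : Matrix n n R) : spectrum R (P⁻¹ * M * P) = spectrum R M :=
  spectrum.units_conjugate' (u := nonsingInvUnit P ((isUnit_iff_isUnit_det P).mp hP))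

theorem diag_conj_mem_spectrum [CommRing R] [Nontrivial R] [LinearOrder n]
    {P M : Matrix n n R} (hP : IsUnit P) (hT : (P⁻¹ * M * P).IsUpperTriangular) (i : n) :
    (P⁻¹ * M * P) i i ∈ spectrum R M :=
  spectrum_nonsing_inv_mul_mul hP M ▸ hT.diag_mem_spectrum i

end Matrix

theorem stmt_5_general (n : ℕ) (d : Fin n → ℝ)
    (J₀ P : Matrix (Fin n) (Fin n) ℂ) (hP : IsUnit P)
    (hD : ((P⁻¹ * Matrix.diagonal (fun i => (d i : ℂ)) * P)).BlockTriangular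
      (id : Fin n → Fin n))
    (hJ : (P⁻¹ * J₀ * P).BlockTriangular (id : Fin n → Fin n))
    (k : Fin n) (hk : 0 < ((P⁻¹ * J₀ * P) k k).re)
    (lam : ℝ) (hlam : (⨆ i, d i) / ((P⁻¹ * J₀ * P) k k).re < lam) :
    ∃ ν ∈ spectrum ℂ (-(Matrix.diagonal fun i => (d i : ℂ)) + (lam : ℂ) • J₀),
      0 < ν.re := by
  set D := Matrix.diagonal fun i => (d i : ℂ)
  have hconj :
      P⁻¹ * (-D + (lam : ℂ) • J₀) * P = -(P⁻¹ * D * P) + (lam : ℂ) • (P⁻¹ * J₀ * P) := by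
    simp only [Matrix.mul_add, Matrix.add_mul, Matrix.mul_neg, Matrix.neg_mul, Matrix.mul_smul,
      Matrix.smul_mul]
  have htri : (P⁻¹ * (-D + (lam : ℂ) • J₀) * P).IsUpperTriangular :=
    hconj ▸ hD.neg.add (hJ.smul _)
  refine ⟨_, diag_conj_mem_spectrum hP htri k, ?_⟩
  have hδ := diag_conj_mem_spectrum hP hD k
  rw [spectrum_diagonal] at hδ
  obtain ⟨i, hi⟩ := hδ
  have hdi : d i ≤ ⨆ j, d j := le_ciSup (Set.finite_range d).bddAbove i
  have hmax : (⨆ j, d j) < lam * ((P⁻¹ * J₀ * P) k k).re := (div_lt_iff₀ hk).mp hlam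
  rw [hconj, Matrix.add_apply, Matrix.neg_apply, Matrix.smul_apply, ← hi]
  simp only [smul_eq_mul, Complex.add_re, Complex.neg_re, Complex.ofReal_re, Complex.re_ofReal_mul]
  linarith

/-- Theorem 1, first bullet, diagonal damping: with `D = diag(d)` (`dᵢ > 0`), `D` and `J₀`
simultaneously triangularizable via `P`, a diagonal entry `μₖ = (P⁻¹J₀P)ₖₖ` with `Re μₖ > 0`,
and `λ > (maxᵢ dᵢ) / Re μₖ`, the matrix `−D + λJ₀` has an eigenvalue with strictly positive
real part. -/
theorem stmt_5 (n : ℕ) (d : Fin n → ℝ) (hd : ∀ i, 0 < d i)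
    (J₀ P : Matrix (Fin n) (Fin n) ℂ) (hP : IsUnit P)
    (hD : ((P⁻¹ * Matrix.diagonal (fun i => (d i : ℂ)) * P)).BlockTriangular
      (id : Fin n → Fin n))
    (hJ : (P⁻¹ * J₀ * P).BlockTriangular (id : Fin n → Fin n))
    (k : Fin n) (hk : 0 < ((P⁻¹ * J₀ * P) k k).re)
    (lam : ℝ) (hlam : (⨆ i, d i) / ((P⁻¹ * J₀ * P) k k).re < lam) :
    ∃ ν ∈ spectrum ℂ (-(Matrix.diagonal fun i => (d i : ℂ)) + (lam : ℂ) • J₀),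
      0 < ν.re :=
  stmt_5_general n d J₀ P hP hD hJ k hk lam hlam
end

section
/- Let A = diag(α₁, …, αₙ) be a real diagonal matrix with αₖ ≥ 0 for all k, let B be an n×n complex matrix, and suppose there is an invertible matrix P such that P⁻¹AP and P⁻¹BP are both upper triangular and for some index k the real part of (P⁻¹(A+B)P)ₖₖ is strictly positive. Set J₀ = A + B, let m = max{ Re μ : μ ∈ σ(J₀), Re μ > 0 } (this set is nonempty), let d > 0 be real, and let λ > d/m. Then M = −dI + λJ₀ has an eigenvalue ν with Re ν > 0, and there exists a vector v ≠ 0 such that ‖exp(tM) v‖ = e^{t·Re ν} ‖v‖ for all t ∈ ℝ; hence the origin is an exponentially unstable equilibrium of the linear system ż = M z. -/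
open NormedSpace

-- diagonal entry of upper triangular matrix is in spectrum
lemma aux_diag_mem_spectrum {n : ℕ} {T : Matrix (Fin n) (Fin n) ℂ}
    (hT : T.BlockTriangular (id : Fin n → Fin n)) (k : Fin n) :
    T k k ∈ spectrum ℂ T := by
  rw [spectrum.mem_iff]
  intro h
  rw [Matrix.isUnit_iff_isUnit_det] at h
  have htri : (algebraMap ℂ (Matrix (Fin n) (Fin n) ℂ) (T k k) - T).BlockTriangular
      (id : Fin n → Fin n) := by
    rw [Matrix.algebraMap_eq_diagonal]
    exact (Matrix.blockTriangular_diagonal _).sub hT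
  rw [Matrix.det_of_upperTriangular htri] at h
  have : ∏ i, (algebraMap ℂ (Matrix (Fin n) (Fin n) ℂ) (T k k) - T) i i = 0 := by
    apply Finset.prod_eq_zero (Finset.mem_univ k)
    simp [Matrix.algebraMap_eq_diagonal]
  rw [this] at h
  exact not_isUnit_zero h

-- conjugation preserves spectrum
lemma aux_spectrum_conj {n : ℕ} {P X : Matrix (Fin n) (Fin n) ℂ} (hP : IsUnit P) :
    spectrum ℂ (P⁻¹ * X * P) = spectrum ℂ X := by
  have h1 : (↑hP.unit⁻¹ : Matrix (Fin n) (Fin n) ℂ) = P⁻¹ := by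
    rw [Matrix.coe_units_inv, hP.unit_spec]
  calc spectrum ℂ (P⁻¹ * X * P)
      = spectrum ℂ (↑hP.unit⁻¹ * X * ↑hP.unit) := by rw [h1, hP.unit_spec]
    _ = spectrum ℂ X := spectrum.units_conjugate'

-- det = 0 gives spectrum membership
lemma aux_mem_spectrum_of_det {n : ℕ} {X : Matrix (Fin n) (Fin n) ℂ} {μ : ℂ}
    (h : (algebraMap ℂ (Matrix (Fin n) (Fin n) ℂ) μ - X).det = 0) :
    μ ∈ spectrum ℂ X := by
  rw [spectrum.mem_iff]
  intro h'
  rw [Matrix.isUnit_iff_isUnit_det, h] at h'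
  exact not_isUnit_zero h'

lemma aux_det_of_mem_spectrum {n : ℕ} {X : Matrix (Fin n) (Fin n) ℂ} {μ : ℂ}
    (h : μ ∈ spectrum ℂ X) :
    (algebraMap ℂ (Matrix (Fin n) (Fin n) ℂ) μ - X).det = 0 := by
  rw [spectrum.mem_iff] at h
  rw [Matrix.isUnit_iff_isUnit_det] at h
  exact of_not_not (fun h0 => h (isUnit_iff_ne_zero.mpr h0))

-- exp on eigenvector
lemma aux_exp_mulVec {n : ℕ} {A : Matrix (Fin n) (Fin n) ℂ} {v : Fin n → ℂ} {c : ℂ}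
    (h : A.mulVec v = c • v) :
    (exp A).mulVec v = exp c • v := by
  letI : SeminormedRing (Matrix (Fin n) (Fin n) ℂ) := Matrix.linftyOpSemiNormedRing
  letI : NormedRing (Matrix (Fin n) (Fin n) ℂ) := Matrix.linftyOpNormedRing
  letI : NormedAlgebra ℂ (Matrix (Fin n) (Fin n) ℂ) := Matrix.linftyOpNormedAlgebra
  have hpow : ∀ m : ℕ, (A ^ m).mulVec v = c ^ m • v := by
    intro m
    induction m with
    | zero => simp [Matrix.one_mulVec]
    | succ m ih =>
        rw [pow_succ', ← Matrix.mulVec_mulVec, ih, Matrix.mulVec_smul, h,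
          smul_smul, ← pow_succ]
  let φ : Matrix (Fin n) (Fin n) ℂ →ₗ[ℂ] (Fin n → ℂ) :=
    { toFun := fun X => X.mulVec v
      map_add' := fun X Y => Matrix.add_mulVec X Y v
      map_smul' := fun r X => Matrix.smul_mulVec r X v }
  have hφ : Continuous φ := LinearMap.continuous_of_finiteDimensional φ
  have hsum : Summable fun m : ℕ => ((Nat.factorial m)⁻¹ : ℂ) • A ^ m := expSeries_summable' A
  let φ' : Matrix (Fin n) (Fin n) ℂ →L[ℂ] (Fin n → ℂ) :=
    LinearMap.toContinuousLinearMap φ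
  have key : φ (exp A) = ∑' m : ℕ, ((Nat.factorial m)⁻¹ : ℂ) • c ^ m • v := by
    rw [exp_eq_tsum ℂ]
    beta_reduce
    have h3 : ∀ m : ℕ, φ' (((Nat.factorial m)⁻¹ : ℂ) • A ^ m)
        = ((Nat.factorial m)⁻¹ : ℂ) • c ^ m • v := by
      intro m
      rw [map_smul]
      show ((Nat.factorial m)⁻¹ : ℂ) • (A ^ m).mulVec v = _
      rw [hpow m]
    exact (hsum.hasSum.mapL φ').tsum_eq.symm.trans (tsum_congr h3)
  have h2 : ∀ m : ℕ, ((Nat.factorial m)⁻¹ : ℂ) • c ^ m • v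
      = (((Nat.factorial m)⁻¹ : ℂ) * c ^ m) • v := fun m => smul_smul _ _ _
  have hsc : Summable fun m : ℕ => ((Nat.factorial m)⁻¹ : ℂ) * c ^ m := by
    simpa [smul_eq_mul] using expSeries_summable' (𝕂 := ℂ) c
  have : φ (exp A) = (∑' m : ℕ, ((Nat.factorial m)⁻¹ : ℂ) * c ^ m) • v := by
    rw [key, tsum_congr h2]
    exact (hsc.hasSum.smul_const v).tsum_eq
  show φ (exp A) = _
  rw [this, exp_eq_tsum ℂ]
  simp [smul_eq_mul]

open NormedSpace in
/-- Combined Lemma 1 + Theorem 1 (first bullet), uniform damping `D = dI`: with `A = diag(α)`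
(`αₖ ≥ 0`) and `B` simultaneously triangularizable via `P`, some diagonal entry of
`P⁻¹(A+B)P` having positive real part, `J₀ = A + B`,
`m = max{Re μ : μ ∈ σ(J₀), Re μ > 0}` (a nonempty set), `d > 0` and `λ > d/m`,
the matrix `M = −dI + λJ₀` has an eigenvalue `ν` with `Re ν > 0` and there is `v ≠ 0`
with `‖exp(tM)v‖ = e^{t·Re ν}‖v‖` for all `t`: the origin is an exponentially unstable
equilibrium of `ż = Mz`. -/
theorem stmt_10 (n : ℕ) (hn : 1 ≤ n) (α : Fin n → ℝ) (hα : ∀ k, 0 ≤ α k)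
    (B P : Matrix (Fin n) (Fin n) ℂ) (hP : IsUnit P)
    (hA : (P⁻¹ * Matrix.diagonal (fun k => (α k : ℂ)) * P).BlockTriangular
      (id : Fin n → Fin n))
    (hB : (P⁻¹ * B * P).BlockTriangular (id : Fin n → Fin n))
    (k : Fin n)
    (hk : 0 < ((P⁻¹ * (Matrix.diagonal (fun k => (α k : ℂ)) + B) * P) k k).re)
    (J₀ : Matrix (Fin n) (Fin n) ℂ)
    (hJ : J₀ = Matrix.diagonal (fun k => (α k : ℂ)) + B)
    (d : ℝ) (hd : 0 < d) (lam : ℝ)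
    (hlam : d / sSup {r : ℝ | ∃ μ ∈ spectrum ℂ J₀, 0 < μ.re ∧ r = μ.re} < lam) :
    {r : ℝ | ∃ μ ∈ spectrum ℂ J₀, 0 < μ.re ∧ r = μ.re}.Nonempty ∧
    ∃ ν ∈ spectrum ℂ
        (-(d : ℂ) • (1 : Matrix (Fin n) (Fin n) ℂ) + (lam : ℂ) • J₀),
      0 < ν.re ∧
      ∃ v : Fin n → ℂ, v ≠ 0 ∧ ∀ t : ℝ,
        ‖(WithLp.equiv 2 (Fin n → ℂ)).symm
            ((exp ((t : ℂ) •
              (-(d : ℂ) • (1 : Matrix (Fin n) (Fin n) ℂ) + (lam : ℂ) • J₀))).mulVec v)‖ =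
          Real.exp (t * ν.re) *
            ‖(WithLp.equiv 2 (Fin n → ℂ)).symm v‖ := by
  subst hJ
  set D : Matrix (Fin n) (Fin n) ℂ := Matrix.diagonal (fun k => (α k : ℂ)) with hD
  set J₀ : Matrix (Fin n) (Fin n) ℂ := D + B with hJ
  set S : Set ℝ := {r : ℝ | ∃ μ ∈ spectrum ℂ J₀, 0 < μ.re ∧ r = μ.re} with hS
  -- triangularization of J₀
  have hT : (P⁻¹ * J₀ * P).BlockTriangular (id : Fin n → Fin n) := by
    have : P⁻¹ * J₀ * P = P⁻¹ * D * P + P⁻¹ * B * P := by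
      rw [hJ]; noncomm_ring
    rw [this]
    exact hA.add hB
  have hspec : spectrum ℂ (P⁻¹ * J₀ * P) = spectrum ℂ J₀ := aux_spectrum_conj hP
  have hkk : ((P⁻¹ * J₀ * P) k k) ∈ spectrum ℂ J₀ :=
    hspec ▸ aux_diag_mem_spectrum hT k
  have hne : S.Nonempty := ⟨((P⁻¹ * J₀ * P) k k).re, (P⁻¹ * J₀ * P) k k, hkk, hk, rfl⟩
  refine ⟨hne, ?_⟩
  -- sSup attained
  have hfin : S.Finite := by
    apply ((J₀.finite_spectrum (R := ℂ)).image Complex.re).subset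
    rintro r ⟨μ, hμ, -, rfl⟩
    exact ⟨μ, hμ, rfl⟩
  have hmem : sSup S ∈ S := Set.Nonempty.csSup_mem hne hfin
  obtain ⟨μ, hμ, hμre, hμeq⟩ := hmem
  set m : ℝ := sSup S with hm
  have hm0 : 0 < m := hμeq ▸ hμre
  have hlam0 : 0 < lam := lt_trans (div_pos hd hm0) hlam
  have hdm : d < lam * m := (div_lt_iff₀ hm0).mp hlam
  set M : Matrix (Fin n) (Fin n) ℂ :=
    -(d : ℂ) • (1 : Matrix (Fin n) (Fin n) ℂ) + (lam : ℂ) • J₀ with hM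
  set ν : ℂ := -(d : ℂ) + (lam : ℂ) * μ with hν
  have hνre : 0 < ν.re := by
    have : ν.re = -d + lam * μ.re := by simp [hν]
    rw [this, ← hμeq]
    linarith
  -- ν is in the spectrum of M
  have hconj : (algebraMap ℂ (Matrix (Fin n) (Fin n) ℂ) ν) - M
      = (lam : ℂ) • ((algebraMap ℂ (Matrix (Fin n) (Fin n) ℂ) μ) - J₀) := by
    rw [Algebra.algebraMap_eq_smul_one, Algebra.algebraMap_eq_smul_one, hν, hM]
    module
  have hdet : ((algebraMap ℂ (Matrix (Fin n) (Fin n) ℂ) ν) - M).det = 0 := by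
    rw [hconj, Matrix.det_smul, aux_det_of_mem_spectrum hμ, mul_zero]
  have hνspec : ν ∈ spectrum ℂ M := aux_mem_spectrum_of_det hdet
  refine ⟨ν, hνspec, hνre, ?_⟩
  -- eigenvector
  obtain ⟨v, hv0, hv⟩ := (Matrix.exists_mulVec_eq_zero_iff.mpr hdet)
  have heig : M.mulVec v = ν • v := by
    have h1 : ((algebraMap ℂ (Matrix (Fin n) (Fin n) ℂ) ν) - M).mulVec v
        = ν • v - M.mulVec v := by
      rw [Matrix.sub_mulVec, Algebra.algebraMap_eq_smul_one,
        Matrix.smul_mulVec, Matrix.one_mulVec]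
    rw [h1] at hv
    exact (sub_eq_zero.mp hv).symm
  refine ⟨v, hv0, fun t => ?_⟩
  have heig' : ((t : ℂ) • M).mulVec v = ((t : ℂ) * ν) • v := by
    rw [Matrix.smul_mulVec, heig, smul_smul]
  have hexp := aux_exp_mulVec heig'
  rw [hexp]
  have hnorm : ‖exp ((t : ℂ) * ν)‖ = Real.exp (t * ν.re) := by
    rw [← Complex.exp_eq_exp_ℂ, Complex.norm_exp]
    congr 1
    simp [Complex.mul_re]
  rw [show (WithLp.equiv 2 (Fin n → ℂ)).symm (exp ((t : ℂ) * ν) • v)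
      = exp ((t : ℂ) * ν) • (WithLp.equiv 2 (Fin n → ℂ)).symm v from rfl, norm_smul, hnorm]
end
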